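/- arXiv:2308.01358 — 5 statements merged into one kernel-verified Lean document; each statement's English description precedes it below -/
import Mathlib

section
/- The 1-quantization operator satisfies the variance bound E[‖C_q(z) − z‖²] ≤ √d · ‖z‖² for every z in R^d. -/
open MeasureTheory ProbabilityTheory

/-!
Coordinatewise, `‖z‖ · sign(z_i) · χ_i − z_i` is an affine function of a Bernoulli variable with
mean `|z_i| / ‖z‖`, so its second moment is `‖z‖ |z_i| − z_i² ≤ ‖z‖ |z_i|`. Summing over `i`
gives `‖z‖ · ‖z‖₁`, and Cauchy–Schwarz bounds `‖z‖₁ ≤ √d ‖z‖`.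
-/

theorem Real.sign_eq_coe_sign (x : ℝ) : Real.sign x = (SignType.sign x : ℝ) := by
  rcases lt_trichotomy x 0 with hx | rfl | hx
  · simp [Real.sign_of_neg hx, hx]
  · simp
  · simp [Real.sign_of_pos hx, hx]

theorem Real.sign_mul_abs (x : ℝ) : Real.sign x * |x| = x := by
  rw [Real.sign_eq_coe_sign, _root_.sign_mul_abs]

theorem Real.sign_mul_self (x : ℝ) : Real.sign x * x = |x| := by
  rw [Real.sign_eq_coe_sign, _root_.sign_mul_self]

theorem EuclideanSpace.sum_abs_le_sqrt_card_mul_norm {ι : Type*} [Fintype ι]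
    (x : EuclideanSpace ℝ ι) : ∑ i, |x i| ≤ √(Fintype.card ι) * ‖x‖ := by
  have hcs : (∑ i, |x i|) ^ 2 ≤ Fintype.card ι * ∑ i, |x i| ^ 2 := by
    simpa using sq_sum_le_card_mul_sum_sq (s := Finset.univ) (f := fun i => |x i|)
  rw [EuclideanSpace.norm_eq, ← Real.sqrt_mul (Nat.cast_nonneg _)]
  simpa using Real.le_sqrt_of_sq_le hcs

theorem sub_sq_eq_of_eq_zero_or_eq_one {x : ℝ} (hx : x = 0 ∨ x = 1) (a b : ℝ) :
    (a * x - b) ^ 2 = (a ^ 2 - 2 * a * b) * x + b ^ 2 := by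
  rcases hx with rfl | rfl <;> ring

section Bernoulli

variable {Ω : Type*} [MeasurableSpace Ω] {μ : Measure Ω} [IsProbabilityMeasure μ]
  {X : Ω → ℝ}

theorem integrable_of_forall_eq_zero_or_eq_one (hX : AEStronglyMeasurable X μ)
    (h01 : ∀ ω, X ω = 0 ∨ X ω = 1) : Integrable X μ :=
  (integrable_const (1 : ℝ)).mono' hX <| .of_forall fun ω => by
    rcases h01 ω with h | h <;> simp [h]

theorem integrable_sub_sq_of_forall_eq_zero_or_eq_one (hX : AEStronglyMeasurable X μ)
    (h01 : ∀ ω, X ω = 0 ∨ X ω = 1) (a b : ℝ) :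
    Integrable (fun ω => (a * X ω - b) ^ 2) μ := by
  simp_rw [sub_sq_eq_of_eq_zero_or_eq_one (h01 _)]
  exact ((integrable_of_forall_eq_zero_or_eq_one hX h01).const_mul _).add (integrable_const _)

theorem integral_sub_sq_of_forall_eq_zero_or_eq_one (hX : AEStronglyMeasurable X μ)
    (h01 : ∀ ω, X ω = 0 ∨ X ω = 1) (a b : ℝ) :
    ∫ ω, (a * X ω - b) ^ 2 ∂μ = (a ^ 2 - 2 * a * b) * ∫ ω, X ω ∂μ + b ^ 2 := by
  simp_rw [sub_sq_eq_of_eq_zero_or_eq_one (h01 _)]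
  rw [integral_add ((integrable_of_forall_eq_zero_or_eq_one hX h01).const_mul _)
    (integrable_const _), integral_const_mul, integral_const]
  simp

end Bernoulli

/-- The left side is `E[(r · sign x · χ − x)²]` for `χ` Bernoulli with mean `|x| / r`. At `r = 0`
the hypothesis forces `x = 0`, consistent with the junk value `|x| / 0 = 0`. -/
theorem quantization_error_second_moment {r x : ℝ} (hx : |x| ≤ r) :
    ((r * Real.sign x) ^ 2 - 2 * (r * Real.sign x) * x) * (|x| / r) + x ^ 2 = r * |x| - x ^ 2 := by
  rcases (abs_nonneg x).trans hx |>.eq_or_lt with rfl | hr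
  · simp [abs_nonpos_iff.mp hx]
  · have hsa := Real.sign_mul_abs x
    have hsx := Real.sign_mul_self x
    field_simp
    linear_combination r * Real.sign x * hsa + (r - 2 * |x|) * hsx - 2 * sq_abs x

theorem quantization_variance_bound_general {Ω : Type*} [MeasurableSpace Ω]
    (μ : Measure Ω) [IsProbabilityMeasure μ]
    (d : ℕ) (z : EuclideanSpace ℝ (Fin d)) (χ : Fin d → Ω → ℝ)
    (hmeas : ∀ i, Measurable (χ i))
    (hval : ∀ i ω, χ i ω = 0 ∨ χ i ω = 1)
    (hmean : ∀ i, ∫ ω, χ i ω ∂μ = |z i| / ‖z‖) :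
    ∫ ω, ∑ i, (‖z‖ * Real.sign (z i) * χ i ω - z i) ^ 2 ∂μ ≤ Real.sqrt d * ‖z‖ ^ 2 := by
  have hcoord (i : Fin d) :
      ∫ ω, (‖z‖ * Real.sign (z i) * χ i ω - z i) ^ 2 ∂μ = ‖z‖ * |z i| - z i ^ 2 := by
    rw [integral_sub_sq_of_forall_eq_zero_or_eq_one (hmeas i).aestronglyMeasurable (hval i),
      hmean, quantization_error_second_moment]
    simpa using PiLp.norm_apply_le z i
  rw [integral_finsetSum _ fun i _ => integrable_sub_sq_of_forall_eq_zero_or_eq_one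
    (hmeas i).aestronglyMeasurable (hval i) _ _]
  calc ∑ i, ∫ ω, (‖z‖ * Real.sign (z i) * χ i ω - z i) ^ 2 ∂μ
      = ∑ i, (‖z‖ * |z i| - z i ^ 2) := Finset.sum_congr rfl fun i _ => hcoord i
    _ ≤ ∑ i, ‖z‖ * |z i| := Finset.sum_le_sum fun i _ => sub_le_self _ (sq_nonneg _)
    _ = ‖z‖ * ∑ i, |z i| := (Finset.mul_sum _ _ _).symm
    _ ≤ ‖z‖ * (√d * ‖z‖) := by
      gcongr
      simpa using EuclideanSpace.sum_abs_le_sqrt_card_mul_norm z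
    _ = √d * ‖z‖ ^ 2 := by ring

/-- The 1-quantization operator `C_q(z)_i = ‖z‖ · sign(z_i) · χ_i` with independent
Bernoulli(`|z_i|/‖z‖`) coordinates satisfies the variance bound
`E[‖C_q(z) − z‖²] ≤ √d · ‖z‖²`. -/
theorem quantization_variance_bound {Ω : Type*} [MeasurableSpace Ω]
    (μ : Measure Ω) [IsProbabilityMeasure μ]
    (d : ℕ) (z : EuclideanSpace ℝ (Fin d)) (χ : Fin d → Ω → ℝ)
    (hmeas : ∀ i, Measurable (χ i))
    (hval : ∀ i ω, χ i ω = 0 ∨ χ i ω = 1)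
    (hindep : iIndepFun χ μ)
    (hmean : ∀ i, ∫ ω, χ i ω ∂μ = |z i| / ‖z‖) :
    ∫ ω, ∑ i, (‖z‖ * Real.sign (z i) * χ i ω - z i) ^ 2 ∂μ ≤ Real.sqrt d * ‖z‖ ^ 2 :=
  quantization_variance_bound_general μ d z χ hmeas hval hmean
end

section
/- For the rand-h operator C_{rd,h}(z) = (d/h)·B(S) ⊙ z with S uniformly distributed over the h-element subsets of {1,...,d} and B(S)_i = 1_{i ∈ S}, and a random vector E with second-moment M independent of S, one has E[C_{rd,h}(E)⊗C_{rd,h}(E)] = (d(h−1))/(h(d−1))·M + (d/h)·(1 − (h−1)/(d−1))·Diag(M). -/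
/-!
Since `S` and `X` are independent, the `(i, j)` entry of the second moment factors as
`(d/h)² · P({i, j} ⊆ S) · M i j`. For a uniform `h`-subset of a `d`-set, counting the
`h`-subsets containing a fixed `t` gives `P(t ⊆ S) = C(h, |t|) / C(d, |t|)`, i.e. `h/d` on the
diagonal and `h(h-1) / (d(d-1))` off it, and the two cases assemble into the stated formula.
-/

open MeasureTheory ProbabilityTheory Finset

theorem Finset.card_filter_powersetCard_subset_mul_choose {α : Type*} [DecidableEq α]
    {s u : Finset α} (hsu : s ⊆ u) (n : ℕ) :
    #((u.powersetCard n).filter (s ⊆ ·)) * (#u).choose #s = (#u).choose n * n.choose #s := by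
  rcases le_or_gt #s n with hsn | hns
  · rw [card_filter_powersetCard_subset s u n hsu hsn, Nat.choose_mul hsn, mul_comm]
  · have hempty : (u.powersetCard n).filter (s ⊆ ·) = ∅ :=
      filter_eq_empty_iff.mpr fun x hx hsx =>
        (card_le_card hsx).not_gt ((mem_powersetCard.mp hx).2 ▸ hns)
    simp [hempty, Nat.choose_eq_zero_of_lt hns]

theorem measurableSet_preimage_finset {Ω β : Type*} [MeasurableSpace Ω] {f : Ω → β}
    (hf : ∀ b, MeasurableSet (f ⁻¹' {b})) (F : Finset β) : MeasurableSet (f ⁻¹' F) := by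
  rw [← set_biUnion_preimage_singleton]
  exact F.measurableSet_biUnion fun b _ => hf b

section RandomSubset

variable {α Ω : Type*} [Fintype α] [DecidableEq α] [MeasurableSpace Ω] {μ : Measure Ω}
  {S : Ω → Finset α}

theorem measurableSet_setOf_subset
    (hS : ∀ s, MeasurableSet {ω | S ω = s}) (t : Finset α) :
    MeasurableSet {ω | t ⊆ S ω} := by
  simpa using measurableSet_preimage_finset hS (univ.filter (t ⊆ ·))

theorem measureReal_setOf_subset_of_uniform {h : ℕ} (hh : h ≤ Fintype.card α)
    (hcard : ∀ ω, #(S ω) = h) (hS : ∀ s, MeasurableSet {ω | S ω = s})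
    (hunif : ∀ s : Finset α, #s = h → μ {ω | S ω = s} = ((Fintype.card α).choose h : ENNReal)⁻¹)
    (t : Finset α) :
    μ.real {ω | t ⊆ S ω} = h.choose #t / (Fintype.card α).choose #t := by
  set F := (univ.powersetCard h).filter (t ⊆ ·)
  have hpre : {ω | t ⊆ S ω} = S ⁻¹' F := by
    ext ω
    simp [F, hcard]
  have hfiber : ∀ s ∈ F, μ (S ⁻¹' {s}) = ((Fintype.card α).choose h : ENNReal)⁻¹ :=
    fun s hs => hunif s (mem_powersetCard.mp (mem_filter.mp hs).1).2
  have hchoose_h : ((Fintype.card α).choose h : ℝ) ≠ 0 := by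
    have := Nat.choose_pos hh
    positivity
  have hchoose_t : ((Fintype.card α).choose #t : ℝ) ≠ 0 := by
    have := Nat.choose_pos (card_le_univ t)
    positivity
  have hcount := card_filter_powersetCard_subset_mul_choose (subset_univ t) h
  rw [card_univ] at hcount
  rw [hpre,
    ← sum_measureReal_preimage_singleton F (fun s _ => hS s)
      (fun s hs => by simpa [hfiber s hs] using (Nat.choose_pos hh).ne'),
    sum_congr rfl fun s hs => by rw [measureReal_def, hfiber s hs], sum_const, nsmul_eq_mul,
    ENNReal.toReal_inv, ENNReal.toReal_natCast]
  field_simp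
  exact_mod_cast hcount

theorem integral_mem_mul_mem_mul_of_indepFun {X : Ω → α → ℝ}
    (hS : ∀ s, MeasurableSet {ω | S ω = s})
    (hindep : IndepFun (fun ω i => if i ∈ S ω then (1 : ℝ) else 0) X μ) (i j : α)
    (hint : Integrable (fun ω => X ω i * X ω j) μ) :
    ∫ ω, ((if i ∈ S ω then 1 else 0) * (if j ∈ S ω then 1 else 0)) * (X ω i * X ω j) ∂μ
      = μ.real {ω | {i, j} ⊆ S ω} * ∫ ω, X ω i * X ω j ∂μ := by
  have hA := measurableSet_setOf_subset hS {i, j}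
  have hindicator : (fun ω => (if i ∈ S ω then (1 : ℝ) else 0) * (if j ∈ S ω then 1 else 0))
      = {ω | {i, j} ⊆ S ω}.indicator 1 := by
    ext ω
    by_cases hi : i ∈ S ω <;> by_cases hj : j ∈ S ω <;>
      simp [Set.indicator, insert_subset_iff, hi, hj]
  have hcoord : Measurable fun v : α → ℝ => v i * v j := by fun_prop
  refine ((hindep.comp hcoord hcoord).integral_mul_eq_mul_integral ?_
    hint.aestronglyMeasurable).trans ?_
  · simp only [Function.comp_def, hindicator]
    exact (stronglyMeasurable_one.indicator hA).aestronglyMeasurable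
  · simp only [Function.comp_def, hindicator, integral_indicator_one hA]

end RandomSubset

theorem randh_second_moment_general {Ω : Type*} [MeasurableSpace Ω]
    (μ : Measure Ω)
    (d h : ℕ) (hh1 : 1 ≤ h) (hhd : h ≤ d)
    (S : Ω → Finset (Fin d)) (X : Ω → Fin d → ℝ) (M : Matrix (Fin d) (Fin d) ℝ)
    (hcard : ∀ ω, (S ω).card = h)
    (hmeasS : ∀ s : Finset (Fin d), MeasurableSet {ω | S ω = s})
    (hunif : ∀ s : Finset (Fin d), s.card = h →
      μ {ω | S ω = s} = ((d.choose h : ENNReal))⁻¹)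
    (hindep : IndepFun (fun ω => fun i => if i ∈ S ω then (1 : ℝ) else 0) X μ)
    (hM : ∀ i j, ∫ ω, X ω i * X ω j ∂μ = M i j)
    (hint : ∀ i j, Integrable (fun ω => X ω i * X ω j) μ) :
    ∀ i j, ∫ ω, (((d : ℝ) / h) * (if i ∈ S ω then 1 else 0) * X ω i) *
                (((d : ℝ) / h) * (if j ∈ S ω then 1 else 0) * X ω j) ∂μ
      = ((d : ℝ) * ((h : ℝ) - 1)) / ((h : ℝ) * ((d : ℝ) - 1)) * M i j
        + ((d : ℝ) / h) * (1 - ((h : ℝ) - 1) / ((d : ℝ) - 1)) *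
          (if i = j then M i i else 0) := by
  intro i j
  have hP := measureReal_setOf_subset_of_uniform (μ := μ) (by simpa using hhd) hcard hmeasS
    (by simpa using hunif) {i, j}
  rw [Fintype.card_fin] at hP
  have hh0 : (h : ℝ) ≠ 0 := by positivity
  have hd0 : (d : ℝ) ≠ 0 := by have : 1 ≤ d := hh1.trans hhd; positivity
  calc _ = ((d : ℝ) / h) ^ 2 * ∫ ω, ((if i ∈ S ω then (1 : ℝ) else 0) *
          (if j ∈ S ω then 1 else 0)) * (X ω i * X ω j) ∂μ := by
        rw [← integral_const_mul]; congr 1; ext ω; ring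
    _ = ((d : ℝ) / h) ^ 2 * (h.choose #{i, j} / d.choose #{i, j} * M i j) := by
        rw [integral_mem_mul_mem_mul_of_indepFun hmeasS hindep i j (hint i j), hP, hM]
    _ = _ := by
        rcases eq_or_ne i j with rfl | hij
        · simp only [insert_eq_of_mem, mem_singleton, card_singleton, Nat.choose_one_right,
            if_true]
          field_simp
          ring
        · rw [card_pair hij, Nat.cast_choose_two, Nat.cast_choose_two, if_neg hij]
          field_simp
          ring

/-- For the rand-`h` operator `C_{rd,h}(z) = (d/h) · B(S) ⊙ z` with `S` uniform over the
`h`-element subsets of `{1,…,d}` and `B(S)_i = 1_{i ∈ S}`, and a random vector `E` with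
second-moment matrix `M` independent of `S`, one has
`E[C_{rd,h}(E) ⊗ C_{rd,h}(E)] = (d(h−1))/(h(d−1)) · M + (d/h)(1 − (h−1)/(d−1)) · Diag M`. -/
theorem randh_second_moment {Ω : Type*} [MeasurableSpace Ω]
    (μ : Measure Ω) [IsProbabilityMeasure μ]
    (d h : ℕ) (hh1 : 1 ≤ h) (hhd : h ≤ d)
    (S : Ω → Finset (Fin d)) (X : Ω → Fin d → ℝ) (M : Matrix (Fin d) (Fin d) ℝ)
    (hcard : ∀ ω, (S ω).card = h)
    (hmeasS : ∀ s : Finset (Fin d), MeasurableSet {ω | S ω = s})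
    (hunif : ∀ s : Finset (Fin d), s.card = h →
      μ {ω | S ω = s} = ((d.choose h : ENNReal))⁻¹)
    (hmX : Measurable X)
    (hindep : IndepFun (fun ω => fun i => if i ∈ S ω then (1 : ℝ) else 0) X μ)
    (hM : ∀ i j, ∫ ω, X ω i * X ω j ∂μ = M i j)
    (hint : ∀ i j, Integrable (fun ω => X ω i * X ω j) μ) :
    ∀ i j, ∫ ω, (((d : ℝ) / h) * (if i ∈ S ω then 1 else 0) * X ω i) *
                (((d : ℝ) / h) * (if j ∈ S ω then 1 else 0) * X ω j) ∂μ
      = ((d : ℝ) * ((h : ℝ) - 1)) / ((h : ℝ) * ((d : ℝ) - 1)) * M i j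
        + ((d : ℝ) / h) * (1 - ((h : ℝ) - 1) / ((d : ℝ) - 1)) *
          (if i = j then M i i else 0) :=
  randh_second_moment_general μ d h hh1 hhd S X M hcard hmeasS hunif hindep hM hint
end

section
/- Let H be a symmetric positive definite d×d matrix, γ > 0 with γH ≼ I, and η_0 ∈ R^d. Define η_k = (I − γH)^k η_0 and the average η̄_{K−1} = (1/K)Σ_{k=0}^{K−1} η_k. Then ⟨η̄_{K−1}, H η̄_{K−1}⟩ ≤ ‖H^{−1/2} η_0‖² / (γ² K²). -/
/-!
Everything in the statement is a function of `H`. The averaged iterate is `p(H) η₀` with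
`p(t) = K⁻¹ ∑_{k<K} (1 - γt)^k`, and `‖H^{-1/2} η₀‖² = ⟨η₀, H⁻¹ η₀⟩`, so by the functional
calculus of `H` the claim reduces to the scalar inequality `t p(t)² ≤ (γ²K²)⁻¹ t⁻¹` for `t` in the
spectrum of `H`, which lies in `(0, 1/γ]`. Since `γt ∑_{k<K} (1 - γt)^k = 1 - (1 - γt)^K`, that
inequality says `(1 - (1 - γt)^K)² ≤ 1`.
-/

open Matrix

open scoped ComplexOrder in
/-- The square root of a positive semidefinite matrix, as defined in Mathlib (Dec 2024). -/
noncomputable def Matrix.PosSemidef.sqrt {n 𝕜 : Type*} [Fintype n] [RCLike 𝕜] [DecidableEq n]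
    {A : Matrix n n 𝕜} (hA : A.PosSemidef) : Matrix n n 𝕜 :=
  (hA.1.eigenvectorUnitary : Matrix n n 𝕜) * diagonal ((↑) ∘ (√·) ∘ hA.1.eigenvalues) *
    (star hA.1.eigenvectorUnitary : Matrix n n 𝕜)

open Finset

noncomputable def averagedGDFilter (γ : ℝ) (K : ℕ) (t : ℝ) : ℝ :=
  (K : ℝ)⁻¹ * ∑ k ∈ range K, (1 - γ * t) ^ k

lemma sq_mul_geom_sum_one_sub_le_one {x : ℝ} (hx₀ : 0 ≤ x) (hx₁ : x ≤ 1) (K : ℕ) :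
    (x * ∑ k ∈ range K, (1 - x) ^ k) ^ 2 ≤ 1 := by
  have hgeom := mul_neg_geom_sum (1 - x) K
  rw [sub_sub_cancel] at hgeom
  have h₀ : 0 ≤ (1 - x) ^ K := pow_nonneg (by linarith) K
  have h₁ : (1 - x) ^ K ≤ 1 := pow_le_one₀ (by linarith) (by linarith)
  rw [hgeom, sq_le_one_iff_abs_le_one, abs_le]
  constructor <;> linarith

lemma mul_averagedGDFilter_sq_le {γ t : ℝ} (hγ : 0 < γ) (ht : 0 < t) (hγt : γ * t ≤ 1) (K : ℕ) :
    t * averagedGDFilter γ K t ^ 2 ≤ (γ ^ 2 * K ^ 2)⁻¹ * t⁻¹ := by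
  have h := sq_mul_geom_sum_one_sub_le_one (by positivity) hγt K
  calc t * averagedGDFilter γ K t ^ 2
      = (K : ℝ)⁻¹ ^ 2 * (γ ^ 2 * t)⁻¹ * (γ * t * ∑ k ∈ range K, (1 - γ * t) ^ k) ^ 2 := by
        unfold averagedGDFilter; field_simp
    _ ≤ (K : ℝ)⁻¹ ^ 2 * (γ ^ 2 * t)⁻¹ * 1 := by gcongr
    _ = (γ ^ 2 * K ^ 2)⁻¹ * t⁻¹ := by field_simp

lemma cfc_averagedGDFilter {A : Type*} [Ring A] [StarRing A] [TopologicalSpace A] [Algebra ℝ A]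
    [ContinuousFunctionalCalculus ℝ A IsSelfAdjoint] (γ : ℝ) (K : ℕ) {a : A}
    (ha : IsSelfAdjoint a) :
    cfc (averagedGDFilter γ K) a = (K : ℝ)⁻¹ • ∑ k ∈ range K, (1 - γ • a) ^ k := by
  have hsum : (fun t => ∑ k ∈ range K, (1 - γ * t) ^ k) =
      ∑ k ∈ range K, fun t => (1 - γ * t) ^ k := by
    ext; simp
  unfold averagedGDFilter
  rw [cfc_const_mul _ _ a, hsum, cfc_sum _ a]
  congr 1
  refine sum_congr rfl fun k _ => ?_
  rw [cfc_pow _ k a, cfc_sub (fun _ => 1) (γ * ·) a, cfc_const_one ℝ a, cfc_const_mul_id _ _ ha]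

namespace Matrix

lemma IsHermitian.mulVec_dotProduct {n R : Type*} [Fintype n] [CommSemiring R] [StarRing R]
    [TrivialStar R] {B : Matrix n n R} (hB : B.IsHermitian) (x y : n → R) :
    (B *ᵥ x) ⬝ᵥ y = x ⬝ᵥ (B *ᵥ y) := by
  rw [dotProduct_mulVec, ← mulVec_transpose, ← conjTranspose_eq_transpose_of_trivial, hB,
    dotProduct_comm]

open scoped ComplexOrder MatrixOrder

variable {n 𝕜 : Type*} [Fintype n] [RCLike 𝕜] [DecidableEq n]

lemma PosSemidef.sqrt_eq_cfc {A : Matrix n n 𝕜} (hA : A.PosSemidef) :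
    hA.sqrt = cfc Real.sqrt A := by
  rw [hA.1.cfc_eq, IsHermitian.cfc, Unitary.conjStarAlgAut_apply]
  rfl

lemma PosSemidef.sqrt_mul_self {A : Matrix n n 𝕜} (hA : A.PosSemidef) :
    hA.sqrt * hA.sqrt = A := by
  rw [hA.sqrt_eq_cfc, ← cfc_mul _ _ _ (A.finite_real_spectrum.continuousOn _)
    (A.finite_real_spectrum.continuousOn _)]
  conv_rhs => rw [← cfc_id' ℝ A]
  exact cfc_congr fun t ht => Real.mul_self_sqrt (spectrum_nonneg_of_nonneg hA.nonneg ht)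

lemma PosSemidef.isHermitian_sqrt {A : Matrix n n 𝕜} (hA : A.PosSemidef) :
    hA.sqrt.IsHermitian := by
  rw [hA.sqrt_eq_cfc]
  exact cfc_predicate _ _

lemma PosSemidef.sqrt_mulVec_dotProduct_self {A : Matrix n n ℝ} (hA : A.PosSemidef)
    (x : n → ℝ) : (hA.sqrt *ᵥ x) ⬝ᵥ (hA.sqrt *ᵥ x) = x ⬝ᵥ (A *ᵥ x) := by
  rw [hA.isHermitian_sqrt.mulVec_dotProduct, mulVec_mulVec, hA.sqrt_mul_self]

lemma PosDef.inv_eq_cfc {A : Matrix n n 𝕜} (hA : A.PosDef) : A⁻¹ = cfc (·⁻¹ : ℝ → ℝ) A := by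
  rw [nonsing_inv_eq_ringInverse, cfc_ringInverse_id _ hA.isUnit hA.1.isSelfAdjoint]

lemma PosDef.pos_of_mem_spectrum {A : Matrix n n 𝕜} (hA : A.PosDef) {t : ℝ}
    (ht : t ∈ spectrum ℝ A) : 0 < t :=
  (isStrictlyPositive_iff_posDef.2 hA).spectrum_pos ht

lemma IsHermitian.mul_le_one_of_mem_spectrum {A : Matrix n n 𝕜} (hA : A.IsHermitian) {γ : ℝ}
    (hγA : (1 - γ • A).PosSemidef) {t : ℝ} (ht : t ∈ spectrum ℝ A) : γ * t ≤ 1 := by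
  have hcfc : cfc (fun s => 1 - γ * s) A = 1 - γ • A := by
    rw [cfc_sub (fun _ => 1) (γ * ·) A, cfc_const_one ℝ A, cfc_const_mul_id _ _ hA.isSelfAdjoint]
  have hmem : 1 - γ * t ∈ spectrum ℝ (1 - γ • A) := by
    rw [← hcfc, cfc_map_spectrum _ _ hA.isSelfAdjoint]
    exact ⟨t, ht, rfl⟩
  linarith [spectrum_nonneg_of_nonneg hγA.nonneg hmem]

lemma dotProduct_cfc_mulVec_le {A : Matrix n n ℝ} {f g : ℝ → ℝ}
    (hfg : ∀ t ∈ spectrum ℝ A, f t ≤ g t) (x : n → ℝ) :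
    x ⬝ᵥ (cfc f A *ᵥ x) ≤ x ⬝ᵥ (cfc g A *ᵥ x) := by
  have h := (le_iff.1 (cfc_mono hfg (A.finite_real_spectrum.continuousOn _)
    (A.finite_real_spectrum.continuousOn _))).dotProduct_mulVec_nonneg x
  simpa [sub_mulVec, dotProduct_sub, sub_nonneg] using h

lemma IsHermitian.cfc_mulVec_dotProduct_mulVec_cfc_mulVec {A : Matrix n n ℝ}
    (hA : A.IsHermitian) (f : ℝ → ℝ) (x : n → ℝ) :
    (cfc f A *ᵥ x) ⬝ᵥ (A *ᵥ (cfc f A *ᵥ x)) = x ⬝ᵥ (cfc (fun t => t * f t ^ 2) A *ᵥ x) := by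
  have hcont (g : ℝ → ℝ) : ContinuousOn g (spectrum ℝ A) := A.finite_real_spectrum.continuousOn g
  have hf : (cfc f A).IsHermitian := cfc_predicate f A
  have hsandwich : cfc f A * (A * cfc f A) = cfc (fun t => t * f t ^ 2) A := by
    conv_lhs => enter [2, 1]; rw [← cfc_id' ℝ A]
    rw [← cfc_mul _ _ _ (hcont _) (hcont _), ← cfc_mul _ _ _ (hcont _) (hcont _)]
    exact cfc_congr fun t _ => by ring
  rw [hf.mulVec_dotProduct, mulVec_mulVec, mulVec_mulVec, Matrix.mul_assoc, hsandwich]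

end Matrix

theorem averaged_gd_initial_condition_bound_general (d : ℕ) (H : Matrix (Fin d) (Fin d) ℝ)
    (γ : ℝ) (η₀ : Fin d → ℝ) (hH : H.PosDef) (hγ : 0 < γ)
    (hI : ((1 : Matrix (Fin d) (Fin d) ℝ) - γ • H).PosSemidef)
    (K : ℕ) :
    ((K : ℝ)⁻¹ • ∑ k ∈ Finset.range K,
        (((1 : Matrix (Fin d) (Fin d) ℝ) - γ • H) ^ k) *ᵥ η₀) ⬝ᵥ
      (H *ᵥ ((K : ℝ)⁻¹ • ∑ k ∈ Finset.range K,
        (((1 : Matrix (Fin d) (Fin d) ℝ) - γ • H) ^ k) *ᵥ η₀))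
    ≤ ((hH.inv.posSemidef.sqrt *ᵥ η₀) ⬝ᵥ (hH.inv.posSemidef.sqrt *ᵥ η₀))
        / (γ ^ 2 * (K : ℝ) ^ 2) := by
  have haverage : (K : ℝ)⁻¹ • ∑ k ∈ range K, ((1 - γ • H) ^ k) *ᵥ η₀
      = cfc (averagedGDFilter γ K) H *ᵥ η₀ := by
    rw [cfc_averagedGDFilter γ K hH.1.isSelfAdjoint, smul_mulVec, sum_mulVec]
  have hbound : (hH.inv.posSemidef.sqrt *ᵥ η₀) ⬝ᵥ (hH.inv.posSemidef.sqrt *ᵥ η₀)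
      / (γ ^ 2 * (K : ℝ) ^ 2) = η₀ ⬝ᵥ (cfc (fun t => (γ ^ 2 * K ^ 2)⁻¹ * t⁻¹) H *ᵥ η₀) := by
    rw [PosSemidef.sqrt_mulVec_dotProduct_self, cfc_const_mul _ _ H
      (H.finite_real_spectrum.continuousOn _), ← hH.inv_eq_cfc, smul_mulVec, dotProduct_smul,
      smul_eq_mul, div_eq_inv_mul]
  rw [haverage, hH.1.cfc_mulVec_dotProduct_mulVec_cfc_mulVec, hbound]
  exact dotProduct_cfc_mulVec_le (fun t ht => mul_averagedGDFilter_sq_le hγ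
    (hH.pos_of_mem_spectrum ht) (hH.1.mul_le_one_of_mem_spectrum hI ht) K) η₀

/-- Let `H` be symmetric positive definite, `γ > 0` with `γH ≼ I`, and `η₀ ∈ ℝ^d`.
With `η_k = (I − γH)^k η₀` and `η̄_{K−1} = (1/K) Σ_{k=0}^{K−1} η_k`, one has
`⟨η̄_{K−1}, H η̄_{K−1}⟩ ≤ ‖H^{−1/2} η₀‖² / (γ² K²)`. -/
theorem averaged_gd_initial_condition_bound (d : ℕ) (H : Matrix (Fin d) (Fin d) ℝ)
    (γ : ℝ) (η₀ : Fin d → ℝ) (hH : H.PosDef) (hγ : 0 < γ)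
    (hI : ((1 : Matrix (Fin d) (Fin d) ℝ) - γ • H).PosSemidef)
    (K : ℕ) (hK : 1 ≤ K) :
    ((K : ℝ)⁻¹ • ∑ k ∈ Finset.range K,
        (((1 : Matrix (Fin d) (Fin d) ℝ) - γ • H) ^ k) *ᵥ η₀) ⬝ᵥ
      (H *ᵥ ((K : ℝ)⁻¹ • ∑ k ∈ Finset.range K,
        (((1 : Matrix (Fin d) (Fin d) ℝ) - γ • H) ^ k) *ᵥ η₀))
    ≤ ((hH.inv.posSemidef.sqrt *ᵥ η₀) ⬝ᵥ (hH.inv.posSemidef.sqrt *ᵥ η₀))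
        / (γ ^ 2 * (K : ℝ) ^ 2) :=
  averaged_gd_initial_condition_bound_general d H γ η₀ hH hγ hI K
end

section
/- Let H be a symmetric positive semidefinite d×d matrix, γ > 0 with γ Tr(H) ≤ 1, and η_0 ∈ R^d. Define η_k = (I − γH)^k η_0 and its average η̄_{K−1} = (1/K)Σ_{k=0}^{K−1} η_k. Then ⟨η̄_{K−1}, H η̄_{K−1}⟩ ≤ ‖η_0‖² / (γK). -/
/-!
With `T = γH` we have `0 ≤ T ≤ 1` in the Loewner order, since the largest eigenvalue of `H` is
at most its trace. Writing `S = ∑_{k<K} (1 - T)^k`, the averaged iterate is `K⁻¹ • S η₀`, so it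
suffices that `S T S ≤ K`. By the functional calculus this reduces to the scalar bound
`x (∑_{k<K} (1 - x)^k)² ≤ K` on `[0, 1]`, which holds because `x ∑_{k<K} (1 - x)^k = 1 - (1 - x)^K`
lies in `[0, 1]` and each of the `K` summands is at most `1`.
-/

open Matrix Finset

lemma mul_sq_geom_sum_one_sub_le {x : ℝ} (h0 : 0 ≤ x) (h1 : x ≤ 1) (K : ℕ) :
    x * (∑ k ∈ range K, (1 - x) ^ k) ^ 2 ≤ K := by
  set s := ∑ k ∈ range K, (1 - x) ^ k
  have hs0 : 0 ≤ s := sum_nonneg fun k _ => pow_nonneg (by linarith) k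
  have hsK : s ≤ K := by
    simpa using sum_le_card_nsmul (range K) (fun k => (1 - x) ^ k) 1
      fun k _ => pow_le_one₀ (by linarith) (by linarith)
  have hxs : x * s = 1 - (1 - x) ^ K := by
    linear_combination -geom_sum_mul (1 - x) K
  have hxs1 : x * s ≤ 1 := by
    rw [hxs]
    linarith [pow_nonneg (sub_nonneg.2 h1) K]
  calc x * s ^ 2 = (x * s) * s := by ring
    _ ≤ 1 * s := by gcongr
    _ ≤ K := by linarith

section FunctionalCalculus

variable {A : Type*} [Ring A] [StarRing A] [TopologicalSpace A] [Algebra ℝ A] [PartialOrder A]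
  [StarOrderedRing A] [ContinuousFunctionalCalculus ℝ A IsSelfAdjoint] [NonnegSpectrumClass ℝ A]

open Polynomial in
lemma geom_sum_one_sub_mul_mul_geom_sum_le {T : A} (h0 : 0 ≤ T) (h1 : T ≤ 1) (K : ℕ) :
    (∑ k ∈ range K, (1 - T) ^ k) * T * (∑ k ∈ range K, (1 - T) ^ k) ≤ algebraMap ℝ A K := by
  have hT : IsSelfAdjoint T := .of_nonneg h0
  let q : ℝ[X] := X * (∑ k ∈ range K, (1 - X) ^ k) ^ 2
  have hq : aeval T q = (∑ k ∈ range K, (1 - T) ^ k) * T * (∑ k ∈ range K, (1 - T) ^ k) := by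
    have hc : Commute T (∑ k ∈ range K, (1 - T) ^ k) :=
      .sum_right _ _ _ fun k _ => ((Commute.one_right T).sub_right (.refl T)).pow_right k
    simp [q, sq, ← mul_assoc, hc.eq]
  rw [← hq, ← cfc_polynomial q T]
  refine cfc_le_algebraMap _ _ _ fun x hx => ?_
  have hx0 : 0 ≤ x := (StarOrderedRing.nonneg_iff_spectrum_nonneg T).1 h0 x hx
  have hx1 : x ≤ 1 := (CFC.le_one_iff T).1 h1 x hx
  simpa [q, eval_finsetSum] using mul_sq_geom_sum_one_sub_le hx0 hx1 K

end FunctionalCalculus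

open scoped MatrixOrder ComplexOrder

lemma Matrix.PosSemidef.le_re_trace_of_mem_spectrum {n 𝕜 : Type*} [Fintype n] [DecidableEq n]
    [RCLike 𝕜] {H : Matrix n n 𝕜} (hH : H.PosSemidef) {x : ℝ} (hx : x ∈ spectrum ℝ H) :
    x ≤ RCLike.re H.trace := by
  obtain ⟨i, rfl⟩ := hH.1.spectrum_real_eq_range_eigenvalues ▸ hx
  rw [hH.1.trace_eq_sum_eigenvalues, map_sum]
  simpa using single_le_sum (fun j _ => hH.eigenvalues_nonneg j) (mem_univ i)

lemma Matrix.dotProduct_mulVec_le_of_le {n 𝕜 : Type*} [Fintype n] [RCLike 𝕜]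
    {M N : Matrix n n 𝕜} (h : M ≤ N) (x : n → 𝕜) :
    star x ⬝ᵥ (M *ᵥ x) ≤ star x ⬝ᵥ (N *ᵥ x) := by
  simpa [sub_mulVec, dotProduct_sub, sub_nonneg] using (le_iff.1 h).dotProduct_mulVec_nonneg x

lemma Matrix.mulVec_dotProduct_mulVec_mulVec {n R : Type*} [Fintype n] [CommSemiring R]
    (S M : Matrix n n R) (x : n → R) :
    (S *ᵥ x) ⬝ᵥ (M *ᵥ (S *ᵥ x)) = x ⬝ᵥ ((Sᵀ * M * S) *ᵥ x) := by
  rw [dotProduct_comm, ← dotProduct_transpose_mulVec, mulVec_mulVec, mulVec_mulVec]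

theorem averaged_gd_initial_condition_bound'_general (d : ℕ) (H : Matrix (Fin d) (Fin d) ℝ)
    (γ : ℝ) (η₀ : Fin d → ℝ) (hH : H.PosSemidef) (hγ : 0 < γ)
    (htr : γ * H.trace ≤ 1) (K : ℕ) :
    ((K : ℝ)⁻¹ • ∑ k ∈ Finset.range K,
        (((1 : Matrix (Fin d) (Fin d) ℝ) - γ • H) ^ k) *ᵥ η₀) ⬝ᵥ
      (H *ᵥ ((K : ℝ)⁻¹ • ∑ k ∈ Finset.range K,
        (((1 : Matrix (Fin d) (Fin d) ℝ) - γ • H) ^ k) *ᵥ η₀))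
    ≤ (η₀ ⬝ᵥ η₀) / (γ * (K : ℝ)) := by
  set S := ∑ k ∈ range K, ((1 : Matrix (Fin d) (Fin d) ℝ) - γ • H) ^ k
  have hT0 : 0 ≤ γ • H := (hH.smul hγ.le).nonneg
  have hT1 : γ • H ≤ 1 := CFC.le_one fun x hx =>
    (hH.smul hγ.le).le_re_trace_of_mem_spectrum hx |>.trans (by simpa [trace_smul] using htr)
  have hS : Sᵀ = S := by
    have hHt : Hᵀ = H := by simpa [conjTranspose_eq_transpose_of_trivial] using hH.1.eq
    simp [S, transpose_sum, transpose_pow, hHt]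
  have hquad : γ * ((S *ᵥ η₀) ⬝ᵥ (H *ᵥ (S *ᵥ η₀))) ≤ K * (η₀ ⬝ᵥ η₀) := by
    have := dotProduct_mulVec_le_of_le (geom_sum_one_sub_mul_mul_geom_sum_le hT0 hT1 K) η₀
    rw [mulVec_dotProduct_mulVec_mulVec, hS]
    simpa [Algebra.algebraMap_eq_smul_one, smul_mulVec, mul_smul_comm, smul_mul_assoc] using this
  rw [← sum_mulVec, mulVec_smul, smul_dotProduct, dotProduct_smul, smul_eq_mul, smul_eq_mul]
  -- true also for `K = 0`, where `0⁻¹ = 0`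
  have hKinv : (K : ℝ)⁻¹ * (K : ℝ)⁻¹ * K = (K : ℝ)⁻¹ := by
    rw [mul_comm, ← mul_assoc]
    simpa using inv_mul_mul_self (K : ℝ)⁻¹
  calc (K : ℝ)⁻¹ * ((K : ℝ)⁻¹ * ((S *ᵥ η₀) ⬝ᵥ (H *ᵥ (S *ᵥ η₀))))
      ≤ (K : ℝ)⁻¹ * ((K : ℝ)⁻¹ * (K * (η₀ ⬝ᵥ η₀) / γ)) := by
        gcongr
        rwa [le_div_iff₀' hγ]
    _ = (K : ℝ)⁻¹ * (K : ℝ)⁻¹ * K * ((η₀ ⬝ᵥ η₀) / γ) := by ring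
    _ = (η₀ ⬝ᵥ η₀) / (γ * K) := by rw [hKinv]; ring

/-- Let `H` be symmetric positive semidefinite, `γ > 0` with `γ Tr(H) ≤ 1`, and
`η₀ ∈ ℝ^d`. With `η_k = (I − γH)^k η₀` and `η̄_{K−1} = (1/K) Σ_{k=0}^{K−1} η_k`, one has
`⟨η̄_{K−1}, H η̄_{K−1}⟩ ≤ ‖η₀‖² / (γ K)`. -/
theorem averaged_gd_initial_condition_bound' (d : ℕ) (H : Matrix (Fin d) (Fin d) ℝ)
    (γ : ℝ) (η₀ : Fin d → ℝ) (hH : H.PosSemidef) (hγ : 0 < γ)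
    (htr : γ * H.trace ≤ 1) (K : ℕ) (hK : 1 ≤ K) :
    ((K : ℝ)⁻¹ • ∑ k ∈ Finset.range K,
        (((1 : Matrix (Fin d) (Fin d) ℝ) - γ • H) ^ k) *ᵥ η₀) ⬝ᵥ
      (H *ᵥ ((K : ℝ)⁻¹ • ∑ k ∈ Finset.range K,
        (((1 : Matrix (Fin d) (Fin d) ℝ) - γ • H) ^ k) *ᵥ η₀))
    ≤ (η₀ ⬝ᵥ η₀) / (γ * (K : ℝ)) :=
  averaged_gd_initial_condition_bound'_general d H γ η₀ hH hγ htr K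
end

section
/- Consider N points w_*^1, ..., w_*^N in R^d with mean w_* and a random vector x (per client i.i.d. copies x^i) with E[x⊗x] = H satisfying the kurtosis bound E[⟨z,x⟩⁴] ≤ κ⟨z,Hz⟩² for all z. Let ε be independent noise with E[ε²|x] = σ², and set Θ_i = E[((x⊗x)(w_* − w_*^i) + εx)⊗((x⊗x)(w_* − w_*^i) + εx)]. Then (1/N)Σ_{i=1}^N Θ_i ≼ (κ·Tr(H·Cov(W_*)) + σ²)·H, where Cov(W_*) = (1/N)Σ_i (w_* − w_*^i)⊗(w_* − w_*^i). -/
open MeasureTheory Matrix ProbabilityTheory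

/-!
Fix a test vector `z` and a client `i`, and put `u = w_* − w_*^i`. Then
`⟨z, g_i⟩ = ⟨z, x⟩⟨u, x⟩ + ε⟨z, x⟩`; since `ε` is independent of `x` and centred, the cross
term integrates to zero and `zᵀ Θ_i z = E[⟨z, x⟩²⟨u, x⟩²] + σ² zᵀ H z`. Cauchy–Schwarz followed
by the kurtosis bound on both fourth moments gives `E[⟨z, x⟩²⟨u, x⟩²] ≤ κ (zᵀ H z)(uᵀ H u)`, so
`Θ_i ≼ (κ uᵀ H u + σ²) H`. Averaging over the clients and using
`(1/N) Σ_i uᵢᵀ H uᵢ = Tr(H Cov(W_*))` gives the bound.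
-/

/-- The mean `w_* = (1/N) Σ_i w_*^i` of the client optima. -/
noncomputable def wstar {d N : ℕ} (w : Fin N → Fin d → ℝ) : Fin d → ℝ :=
  fun k => (∑ i, w i k) / N

/-- The deviation `w_* − w_*^i` of client `i`'s optimum from the mean. -/
noncomputable def devi {d N : ℕ} (w : Fin N → Fin d → ℝ) (i : Fin N) : Fin d → ℝ :=
  fun k => wstar w k - w i k

/-- The stochastic gradient at the optimum on client `i`:
`g_i = (x ⊗ x)(w_* − w_*^i) + ε x`, coordinatewise. -/
noncomputable def gradStar {Ω : Type*} {d N : ℕ} (w : Fin N → Fin d → ℝ)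
    (x : Ω → Fin d → ℝ) (ε : Ω → ℝ) (i : Fin N) (ω : Ω) : Fin d → ℝ :=
  fun a => x ω a * (∑ k, x ω k * devi w i k) + ε ω * x ω a

/-- The second-moment matrix `Θ_i = E[g_i ⊗ g_i]`. -/
noncomputable def Theta {Ω : Type*} [MeasurableSpace Ω] (μ : Measure Ω)
    {d N : ℕ} (w : Fin N → Fin d → ℝ) (x : Ω → Fin d → ℝ) (ε : Ω → ℝ) (i : Fin N) :
    Matrix (Fin d) (Fin d) ℝ :=
  Matrix.of fun a b => ∫ ω, gradStar w x ε i ω a * gradStar w x ε i ω b ∂μ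

/-- `Cov(W_*) = (1/N) Σ_i (w_* − w_*^i) ⊗ (w_* − w_*^i)`. -/
noncomputable def covW {d N : ℕ} (w : Fin N → Fin d → ℝ) : Matrix (Fin d) (Fin d) ℝ :=
  Matrix.of fun a b => (∑ i, devi w i a * devi w i b) / N

lemma trace_mul_covW {d N : ℕ} (A : Matrix (Fin d) (Fin d) ℝ) (w : Fin N → Fin d → ℝ) :
    (A * covW w).trace = (N : ℝ)⁻¹ * ∑ i, devi w i ⬝ᵥ (A *ᵥ devi w i) := by
  have hcov : covW w = (N : ℝ)⁻¹ • ∑ i, vecMulVec (devi w i) (devi w i) := by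
    ext a b
    simp [covW, vecMulVec_apply, Matrix.sum_apply, div_eq_inv_mul]
  simp only [hcov, mul_smul_comm, Finset.mul_sum, trace_smul, trace_sum, mul_vecMulVec,
    trace_vecMulVec, smul_eq_mul, dotProduct_comm (A *ᵥ _)]

lemma dotProduct_gradStar {Ω : Type*} {d N : ℕ} (w : Fin N → Fin d → ℝ) (x : Ω → Fin d → ℝ)
    (ε : Ω → ℝ) (i : Fin N) (z : Fin d → ℝ) (ω : Ω) :
    z ⬝ᵥ gradStar w x ε i ω = (z ⬝ᵥ x ω) * (devi w i ⬝ᵥ x ω) + ε ω * (z ⬝ᵥ x ω) := by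
  have hgrad : gradStar w x ε i ω = (x ω ⬝ᵥ devi w i) • x ω + ε ω • x ω := by
    funext a
    simp only [gradStar, Pi.add_apply, Pi.smul_apply, smul_eq_mul, dotProduct]
    ring
  rw [hgrad, dotProduct_add, dotProduct_smul, dotProduct_smul, smul_eq_mul, smul_eq_mul,
    dotProduct_comm (x ω)]
  ring

noncomputable def secondMoment {Ω ι : Type*} [MeasurableSpace Ω] (μ : Measure Ω)
    (f : Ω → ι → ℝ) : Matrix ι ι ℝ :=
  of fun a b => ∫ ω, f ω a * f ω b ∂μ

section Integrals

variable {Ω : Type*} [MeasurableSpace Ω] {μ : Measure Ω}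

section SecondMoment

variable {ι : Type*} [Fintype ι] {f : Ω → ι → ℝ}

omit [Fintype ι] in
lemma secondMoment_isHermitian (μ : Measure Ω) (f : Ω → ι → ℝ) :
    (secondMoment μ f).IsHermitian :=
  ext fun _ _ => integral_congr_ae (ae_of_all _ fun _ => mul_comm _ _)

lemma sq_dotProduct (z v : ι → ℝ) :
    (z ⬝ᵥ v) ^ 2 = ∑ a, ∑ b, z a * z b * (v a * v b) := by
  rw [sq, dotProduct, Finset.sum_mul_sum]
  exact Finset.sum_congr rfl fun a _ => Finset.sum_congr rfl fun b _ => by ring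

lemma integrable_mul_sq_dotProduct {g : Ω → ℝ}
    (h : ∀ a b, Integrable (fun ω => g ω * (f ω a * f ω b)) μ) (z : ι → ℝ) :
    Integrable (fun ω => g ω * (z ⬝ᵥ f ω) ^ 2) μ := by
  refine (integrable_finsetSum Finset.univ fun a _ => integrable_finsetSum Finset.univ fun b _ =>
    (h a b).const_mul (z a * z b)).congr (ae_of_all _ fun ω => ?_)
  simp only [sq_dotProduct, Finset.mul_sum]
  exact Finset.sum_congr rfl fun a _ => Finset.sum_congr rfl fun b _ => by ring

lemma integrable_sq_dotProduct (h : ∀ a b, Integrable (fun ω => f ω a * f ω b) μ)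
    (z : ι → ℝ) : Integrable (fun ω => (z ⬝ᵥ f ω) ^ 2) μ := by
  simpa using integrable_mul_sq_dotProduct (g := fun _ => 1) (by simpa using h) z

lemma dotProduct_secondMoment_mulVec (h : ∀ a b, Integrable (fun ω => f ω a * f ω b) μ)
    (z : ι → ℝ) : z ⬝ᵥ (secondMoment μ f *ᵥ z) = ∫ ω, (z ⬝ᵥ f ω) ^ 2 ∂μ := by
  simp_rw [sq_dotProduct]
  rw [integral_finsetSum _ fun a _ => integrable_finsetSum _ fun b _ => (h a b).const_mul _]
  simp_rw [integral_finsetSum _ fun b _ => (h _ b).const_mul _, integral_const_mul]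
  simp only [dotProduct, mulVec, secondMoment, of_apply, Finset.mul_sum]
  exact Finset.sum_congr rfl fun a _ => Finset.sum_congr rfl fun b _ => by ring

end SecondMoment

lemma integral_mul_le_of_integral_sq_le {f g : Ω → ℝ} {a b : ℝ}
    (hf : 0 ≤ᵐ[μ] f) (hg : 0 ≤ᵐ[μ] g) (hf2 : MemLp f 2 μ) (hg2 : MemLp g 2 μ)
    (ha : 0 ≤ a) (hb : 0 ≤ b) (hfa : ∫ ω, f ω ^ 2 ∂μ ≤ a ^ 2)
    (hgb : ∫ ω, g ω ^ 2 ∂μ ≤ b ^ 2) :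
    ∫ ω, f ω * g ω ∂μ ≤ a * b := by
  have holder := integral_mul_le_Lp_mul_Lq_of_nonneg Real.HolderConjugate.two_two hf hg
    (by simpa using hf2) (by simpa using hg2)
  simp only [Real.rpow_two, ← Real.sqrt_eq_rpow] at holder
  calc ∫ ω, f ω * g ω ∂μ ≤ √(∫ ω, f ω ^ 2 ∂μ) * √(∫ ω, g ω ^ 2 ∂μ) := holder
    _ ≤ √(a ^ 2) * √(b ^ 2) := by gcongr
    _ = a * b := by rw [Real.sqrt_sq ha, Real.sqrt_sq hb]

lemma integral_sq_mul_add_mul_of_indepFun {E : Type*} [MeasurableSpace E] {X : Ω → E}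
    {ε : Ω → ℝ} {s t : E → ℝ} (hX : Measurable X) (hε : Measurable ε) (hs : Measurable s)
    (ht : Measurable t) (hindep : IndepFun ε X μ) (hε0 : ∫ ω, ε ω ∂μ = 0)
    (hint : Integrable (fun ω => (s (X ω) * t (X ω) + ε ω * s (X ω)) ^ 2) μ)
    (hst : Integrable (fun ω => s (X ω) ^ 2 * t (X ω) ^ 2) μ)
    (hε2 : Integrable (fun ω => ε ω ^ 2) μ) (hs2 : Integrable (fun ω => s (X ω) ^ 2) μ) :
    ∫ ω, (s (X ω) * t (X ω) + ε ω * s (X ω)) ^ 2 ∂μ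
      = ∫ ω, s (X ω) ^ 2 * t (X ω) ^ 2 ∂μ + (∫ ω, ε ω ^ 2 ∂μ) * ∫ ω, s (X ω) ^ 2 ∂μ := by
  have hm : Measurable fun v => s v ^ 2 * t v := (hs.pow_const 2).mul ht
  have hindep_sq : IndepFun (fun ω => ε ω ^ 2) (fun ω => s (X ω) ^ 2) μ :=
    hindep.comp (measurable_id.pow_const 2) (hs.pow_const 2)
  have hindep_cross : IndepFun ε (fun ω => s (X ω) ^ 2 * t (X ω)) μ :=
    hindep.comp measurable_id hm
  have hnoise : Integrable (fun ω => ε ω ^ 2 * s (X ω) ^ 2) μ :=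
    hindep_sq.integrable_mul hε2 hs2
  have hcross : Integrable (fun ω => ε ω * (s (X ω) ^ 2 * t (X ω))) μ := by
    refine (((hint.sub hst).sub hnoise).div_const 2).congr (ae_of_all _ fun ω => ?_)
    simp only [Pi.sub_apply]
    ring
  have hcross0 : ∫ ω, ε ω * (s (X ω) ^ 2 * t (X ω)) ∂μ = 0 := by
    rw [hindep_cross.integral_fun_mul_eq_mul_integral hε.aestronglyMeasurable
      (hm.comp hX).aestronglyMeasurable, hε0, zero_mul]
  calc ∫ ω, (s (X ω) * t (X ω) + ε ω * s (X ω)) ^ 2 ∂μ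
      = ∫ ω, (s (X ω) ^ 2 * t (X ω) ^ 2 + 2 * (ε ω * (s (X ω) ^ 2 * t (X ω)))
          + ε ω ^ 2 * s (X ω) ^ 2) ∂μ :=
        integral_congr_ae (ae_of_all _ fun ω => by ring)
    _ = ∫ ω, s (X ω) ^ 2 * t (X ω) ^ 2 ∂μ
          + 2 * ∫ ω, ε ω * (s (X ω) ^ 2 * t (X ω)) ∂μ
          + ∫ ω, ε ω ^ 2 * s (X ω) ^ 2 ∂μ := by
        rw [integral_add ?_ hnoise, integral_add hst (hcross.const_mul 2), integral_const_mul]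
        exact hst.add (hcross.const_mul 2)
    _ = _ := by
        rw [hcross0, hindep_sq.integral_fun_mul_eq_mul_integral
          (hε.pow_const 2).aestronglyMeasurable ((hs.pow_const 2).comp hX).aestronglyMeasurable]
        ring

end Integrals

section ClientBound

variable {Ω : Type*} [MeasurableSpace Ω] {μ : Measure Ω} {d N : ℕ} {w : Fin N → Fin d → ℝ}
  {x : Ω → Fin d → ℝ} {ε : Ω → ℝ} {κ σ : ℝ} (hκ : 0 ≤ κ)
  (hmx : Measurable x) (hmε : Measurable ε)
  (hintH : ∀ i j, Integrable (fun ω => x ω i * x ω j) μ)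
  (hint4 : ∀ (z : Fin d → ℝ) (i j : Fin d),
    Integrable (fun ω => (z ⬝ᵥ x ω) ^ 2 * (x ω i * x ω j)) μ)
  (hkurt : ∀ z : Fin d → ℝ,
    ∫ ω, (z ⬝ᵥ x ω) ^ 4 ∂μ ≤ κ * (z ⬝ᵥ (secondMoment μ x *ᵥ z)) ^ 2)
  (hindep : IndepFun ε x μ) (hε0 : ∫ ω, ε ω ∂μ = 0) (hε2 : ∫ ω, ε ω ^ 2 ∂μ = σ ^ 2)
  (hintε2 : Integrable (fun ω => ε ω ^ 2) μ) (i : Fin N)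
  (hintΘ : ∀ a b, Integrable (fun ω => gradStar w x ε i ω a * gradStar w x ε i ω b) μ)
include hκ hmx hmε hintH hint4 hkurt hindep hε0 hε2 hintε2 hintΘ

lemma dotProduct_Theta_mulVec_le (z : Fin d → ℝ) :
    z ⬝ᵥ (Theta μ w x ε i *ᵥ z) ≤ (κ * (devi w i ⬝ᵥ (secondMoment μ x *ᵥ devi w i)) + σ ^ 2)
      * (z ⬝ᵥ (secondMoment μ x *ᵥ z)) := by
  set u := devi w i
  set q := fun v => v ⬝ᵥ (secondMoment μ x *ᵥ v)
  have hq : ∀ v, q v = ∫ ω, (v ⬝ᵥ x ω) ^ 2 ∂μ := dotProduct_secondMoment_mulVec hintH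
  have hq_nonneg : ∀ v, 0 ≤ q v := fun v => by
    rw [hq]
    exact integral_nonneg fun _ => sq_nonneg _
  have hmdot : ∀ v : Fin d → ℝ, Measurable fun y : Fin d → ℝ => v ⬝ᵥ y :=
    fun v => (continuous_const.dotProduct continuous_id).measurable
  have hfourth : ∀ v v' : Fin d → ℝ,
      Integrable (fun ω => (v ⬝ᵥ x ω) ^ 2 * (v' ⬝ᵥ x ω) ^ 2) μ :=
    fun v => integrable_mul_sq_dotProduct (hint4 v)
  have hsq_memLp : ∀ v : Fin d → ℝ, MemLp (fun ω => (v ⬝ᵥ x ω) ^ 2) 2 μ := fun v =>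
    (memLp_two_iff_integrable_sq (((hmdot v).comp hmx).pow_const 2).aestronglyMeasurable).2
      (by simpa only [← sq, Function.comp_apply] using hfourth v v)
  have hkurt_sq : ∀ v, ∫ ω, ((v ⬝ᵥ x ω) ^ 2) ^ 2 ∂μ ≤ (√κ * q v) ^ 2 := fun v => by
    simpa only [← pow_mul, mul_pow, Real.sq_sqrt hκ] using hkurt v
  have hgrad : ∀ ω, (z ⬝ᵥ gradStar w x ε i ω) ^ 2
      = ((z ⬝ᵥ x ω) * (u ⬝ᵥ x ω) + ε ω * (z ⬝ᵥ x ω)) ^ 2 := fun ω => by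
    rw [dotProduct_gradStar]
  have hsplit := integral_sq_mul_add_mul_of_indepFun hmx hmε (hmdot z) (hmdot u) hindep hε0
    ((integrable_sq_dotProduct hintΘ z).congr (ae_of_all _ hgrad)) (hfourth z u) hintε2
    (integrable_sq_dotProduct hintH z)
  have hCS := integral_mul_le_of_integral_sq_le (ae_of_all _ fun _ => sq_nonneg _)
    (ae_of_all _ fun _ => sq_nonneg _) (hsq_memLp z) (hsq_memLp u)
    (mul_nonneg (Real.sqrt_nonneg κ) (hq_nonneg z))
    (mul_nonneg (Real.sqrt_nonneg κ) (hq_nonneg u)) (hkurt_sq z) (hkurt_sq u)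
  calc z ⬝ᵥ (Theta μ w x ε i *ᵥ z)
      = ∫ ω, (z ⬝ᵥ x ω) ^ 2 * (u ⬝ᵥ x ω) ^ 2 ∂μ + σ ^ 2 * q z := by
        rw [show Theta μ w x ε i = secondMoment μ (gradStar w x ε i) from rfl,
          dotProduct_secondMoment_mulVec hintΘ, integral_congr_ae (ae_of_all _ hgrad), hsplit,
          hε2, hq]
    _ ≤ √κ * q z * (√κ * q u) + σ ^ 2 * q z := by gcongr
    _ = (κ * q u + σ ^ 2) * q z := by
        rw [mul_mul_mul_comm, Real.mul_self_sqrt hκ]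
        ring

lemma posSemidef_smul_secondMoment_sub_Theta :
    ((κ * (devi w i ⬝ᵥ (secondMoment μ x *ᵥ devi w i)) + σ ^ 2) • secondMoment μ x
      - Theta μ w x ε i).PosSemidef := by
  refine .of_dotProduct_mulVec_nonneg (((secondMoment_isHermitian μ x).smul
    (IsSelfAdjoint.all _)).sub (secondMoment_isHermitian μ _)) fun z => ?_
  rw [star_trivial, sub_mulVec, dotProduct_sub, smul_mulVec, dotProduct_smul, smul_eq_mul,
    sub_nonneg]
  exact dotProduct_Theta_mulVec_le hκ hmx hmε hintH hint4 hkurt hindep hε0 hε2 hintε2 i hintΘ z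

end ClientBound

theorem client_heterogeneity_bound_general {Ω : Type*} [MeasurableSpace Ω]
    (μ : Measure Ω)
    (d N : ℕ) (hN : 0 < N) (w : Fin N → Fin d → ℝ)
    (x : Ω → Fin d → ℝ) (ε : Ω → ℝ)
    (H : Matrix (Fin d) (Fin d) ℝ) (κ σ : ℝ) (hκ : 0 < κ)
    (hmx : Measurable x) (hmε : Measurable ε)
    (hH : ∀ i j, ∫ ω, x ω i * x ω j ∂μ = H i j)
    (hintH : ∀ i j, Integrable (fun ω => x ω i * x ω j) μ)
    (hint4 : ∀ (z : Fin d → ℝ) (i j : Fin d),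
      Integrable (fun ω => (∑ k, z k * x ω k) ^ 2 * (x ω i * x ω j)) μ)
    (hkurt : ∀ z : Fin d → ℝ,
      ∫ ω, (∑ k, z k * x ω k) ^ 4 ∂μ ≤ κ * (z ⬝ᵥ (H *ᵥ z)) ^ 2)
    (hindep : IndepFun ε x μ)
    (hε0 : ∫ ω, ε ω ∂μ = 0)
    (hε2 : ∫ ω, ε ω ^ 2 ∂μ = σ ^ 2)
    (hintε2 : Integrable (fun ω => ε ω ^ 2) μ)
    (hintΘ : ∀ (i : Fin N) (a b : Fin d),
      Integrable (fun ω => gradStar w x ε i ω a * gradStar w x ε i ω b) μ) :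
    (((κ * (H * covW w).trace + σ ^ 2) • H)
      - (N : ℝ)⁻¹ • ∑ i, Theta μ w x ε i).PosSemidef := by
  obtain rfl : H = secondMoment μ x := ext fun a b => (hH a b).symm
  set q := fun i => devi w i ⬝ᵥ (secondMoment μ x *ᵥ devi w i)
  have hclients := posSemidef_sum Finset.univ fun i _ =>
    posSemidef_smul_secondMoment_sub_Theta hκ.le hmx hmε hintH hint4 hkurt hindep hε0 hε2
      hintε2 i (hintΘ i)
  have hmean : (N : ℝ)⁻¹ * ∑ i, (κ * q i + σ ^ 2) = κ * ((N : ℝ)⁻¹ * ∑ i, q i) + σ ^ 2 := by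
    have hN' : (N : ℝ) ≠ 0 := Nat.cast_ne_zero.2 hN.ne'
    rw [Finset.sum_add_distrib, ← Finset.mul_sum, Finset.sum_const, Finset.card_univ,
      Fintype.card_fin, nsmul_eq_mul, mul_add, inv_mul_cancel_left₀ hN']
    ring
  convert hclients.smul (inv_nonneg.2 (Nat.cast_nonneg N : (0 : ℝ) ≤ N)) using 1
  rw [Finset.sum_sub_distrib, smul_sub, ← Finset.sum_smul, smul_smul, hmean, trace_mul_covW]

/-- Impact of client heterogeneity: if `x` has second moment `H` and bounded kurtosis
with constant `κ`, and `ε` is independent zero-mean noise with `E[ε²] = σ²`, then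
`(1/N) Σ_i Θ_i ≼ (κ · Tr(H · Cov(W_*)) + σ²) · H` in the Loewner order. -/
theorem client_heterogeneity_bound {Ω : Type*} [MeasurableSpace Ω]
    (μ : Measure Ω) [IsProbabilityMeasure μ]
    (d N : ℕ) (hN : 0 < N) (w : Fin N → Fin d → ℝ)
    (x : Ω → Fin d → ℝ) (ε : Ω → ℝ)
    (H : Matrix (Fin d) (Fin d) ℝ) (κ σ : ℝ) (hκ : 0 < κ)
    (hmx : Measurable x) (hmε : Measurable ε)
    (hH : ∀ i j, ∫ ω, x ω i * x ω j ∂μ = H i j)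
    (hintH : ∀ i j, Integrable (fun ω => x ω i * x ω j) μ)
    (hint4 : ∀ (z : Fin d → ℝ) (i j : Fin d),
      Integrable (fun ω => (∑ k, z k * x ω k) ^ 2 * (x ω i * x ω j)) μ)
    (hkurt : ∀ z : Fin d → ℝ,
      ∫ ω, (∑ k, z k * x ω k) ^ 4 ∂μ ≤ κ * (z ⬝ᵥ (H *ᵥ z)) ^ 2)
    (hindep : IndepFun ε x μ)
    (hε0 : ∫ ω, ε ω ∂μ = 0)
    (hε2 : ∫ ω, ε ω ^ 2 ∂μ = σ ^ 2)
    (hintε2 : Integrable (fun ω => ε ω ^ 2) μ)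
    (hintΘ : ∀ (i : Fin N) (a b : Fin d),
      Integrable (fun ω => gradStar w x ε i ω a * gradStar w x ε i ω b) μ) :
    (((κ * (H * covW w).trace + σ ^ 2) • H)
      - (N : ℝ)⁻¹ • ∑ i, Theta μ w x ε i).PosSemidef :=
  client_heterogeneity_bound_general μ d N hN w x ε H κ σ hκ hmx hmε hH hintH hint4 hkurt hindep hε0
    hε2 hintε2 hintΘ
end
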